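/- Let ξ be a real irrational number that is not a Liouville number (i.e., μ(ξ) < +∞). Then the density exponent of ξ satisfies ν(ξ) = 0. -/

import Mathlib

open Filter Topology

/-- The irrationality exponent of a real number, as an extended real:
the infimum of all real `μ` such that `|ξ - p/q| > 1/q^μ` for all integers `p, q`
with `q` sufficiently large (`⊤` if no such real `μ` exists). -/
noncomputable def irrationalityExponent (ξ : ℝ) : EReal :=
  sInf {x : EReal | ∃ μ : ℝ, x = (μ : EReal) ∧
    ∀ᶠ q : ℕ in atTop, ∀ p : ℤ, |ξ - (p : ℝ) / (q : ℝ)| > 1 / (q : ℝ) ^ μ}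

/-- `α_ξ(u)`: the limsup of `|u_{n+1} ξ - v_{n+1}| / |u_n ξ - v_n|`, where `v_n` is the
nearest integer to `u_n ξ`, computed in the extended reals. -/
noncomputable def alphaExp (ξ : ℝ) (u : ℕ → ℕ) : EReal :=
  limsup (fun n =>
    ((|(u (n + 1) : ℝ) * ξ - (round ((u (n + 1) : ℝ) * ξ) : ℝ)| /
      |(u n : ℝ) * ξ - (round ((u n : ℝ) * ξ) : ℝ)| : ℝ) : EReal)) atTop

/-- `β(u)`: the limsup of `u_{n+1} / u_n`, computed in the extended reals. -/
noncomputable def betaExp (u : ℕ → ℕ) : EReal :=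
  limsup (fun n => (((u (n + 1) : ℝ) / (u n : ℝ) : ℝ) : EReal)) atTop

/-- The density exponent `ν(ξ)`: the infimum of `log √(α_ξ(u) β(u))` over all
non-decreasing sequences `u` of positive integers with `α_ξ(u) < 1` and `β(u) < +∞`
(`⊤` if there is no such sequence). -/
noncomputable def densityExponent (ξ : ℝ) : EReal :=
  sInf {x : EReal | ∃ u : ℕ → ℕ, Monotone u ∧ (∀ n, 0 < u n) ∧
    alphaExp ξ u < 1 ∧ betaExp u < ⊤ ∧
    x = ((Real.log (Real.sqrt ((alphaExp ξ u).toReal * (betaExp u).toReal)) : ℝ) : EReal)}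

/-!
Lower bound. Write `‖x‖ = intDist x` for the distance to `ℤ` and `d_n = ‖u_n ξ‖`. If
`d_{n+1} < d_n` and `u_n ≤ u_{n+1}`, the integer `u_{n+1} v_n - u_n v_{n+1}` is nonzero, so
`1 ≤ u_n d_{n+1} + u_{n+1} d_n`. If `α β < 1`, the products `u_n d_n` would decay geometrically,
while this inequality keeps them above `1 / (α + β)`; hence `α β ≥ 1` and `ν(ξ) ≥ 0`.

Upper bound. Since `ξ` is not Liouville, `‖m ξ‖ ≥ c m^(-ν)` for all `m ≥ 1`. Dirichlet gives
`k ≤ R` with `c R^(-ν) ≤ ‖k ξ‖ < 1 / R`, so walking along multiples of `k` the values `‖m ξ‖`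
enter any window of width `1 / R` within `O(R^(1+ν))` steps. Taking `R` a small power of `q`,
every large `q` has a successor `m ∈ (ρ q, σ q]` with `‖m ξ‖ ≈ q^(-κ)`. Iterating yields
`α ≤ ρ^(-κ/2) < 1` and `β ≤ σ`, so `ν(ξ) ≤ log σ` for every `σ > 1`.
-/

noncomputable def intDist (x : ℝ) : ℝ := |x - round x|

lemma intDist_le_abs_sub (x : ℝ) (z : ℤ) : intDist x ≤ |x - z| := round_le x z

lemma intDist_nonneg (x : ℝ) : 0 ≤ intDist x := abs_nonneg _

lemma intDist_pos_of_irrational {x : ℝ} (hx : Irrational x) : 0 < intDist x :=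
  abs_pos.2 (sub_ne_zero.2 (hx.ne_int _))

lemma intDist_neg (x : ℝ) : intDist (-x) = intDist x := by
  have h (y : ℝ) : intDist (-y) ≤ intDist y := by
    simpa [intDist, abs_sub_comm, neg_add_eq_sub] using intDist_le_abs_sub (-y) (-round y)
  exact le_antisymm (h x) (by simpa using h (-x))

lemma intDist_add_intCast (x : ℝ) (z : ℤ) : intDist (x + z) = intDist x := by
  simp [intDist, round_add_intCast]

lemma intDist_eq_of_abs_sub_lt {x : ℝ} {z : ℤ} (h : |x - z| < 1 / 2) :
    intDist x = |x - z| := by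
  have hround : round x = z := by
    rw [round_eq, Int.floor_eq_iff]
    constructor <;> linarith [abs_lt.1 h]
  rw [intDist, hround]

lemma exists_pos_mul_le_of_eventually_le {f g : ℕ → ℝ} (hf : ∀ m, 0 < m → 0 < f m)
    (hg : ∀ m, 0 < m → g m ∈ Set.Icc 0 1) (h : ∀ᶠ m in atTop, g m ≤ f m) :
    ∃ c : ℝ, 0 < c ∧ c ≤ 1 ∧ ∀ m, 0 < m → c * g m ≤ f m := by
  obtain ⟨M, hM⟩ := eventually_atTop.1 h
  set S := insert 1 ((Finset.Ico 1 M).image f)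
  have hS : S.Nonempty := Finset.insert_nonempty _ _
  have hc0 : 0 < S.min' hS := by
    refine (Finset.lt_min'_iff _ _).2 fun y hy => ?_
    rcases Finset.mem_insert.1 hy with rfl | hy
    · exact one_pos
    · obtain ⟨k, hk, rfl⟩ := Finset.mem_image.1 hy
      exact hf k (Finset.mem_Ico.1 hk).1
  have hc1 : S.min' hS ≤ 1 := S.min'_le _ (Finset.mem_insert_self _ _)
  refine ⟨S.min' hS, hc0, hc1, fun m hm => ?_⟩
  obtain ⟨hg0, hg1⟩ := hg m hm
  rcases lt_or_ge m M with hmM | hmM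
  · have hcf : S.min' hS ≤ f m :=
      S.min'_le _ (Finset.mem_insert_of_mem (Finset.mem_image_of_mem f
        (Finset.mem_Ico.2 ⟨hm, hmM⟩)))
    nlinarith
  · nlinarith [hM m hmM]

lemma exists_eventually_rpow_neg_le_intDist {ξ : ℝ} (h : irrationalityExponent ξ < ⊤) :
    ∃ ν : ℝ, 0 ≤ ν ∧ ∀ᶠ q : ℕ in atTop, (q : ℝ) ^ (-ν) ≤ intDist (q * ξ) := by
  obtain ⟨_, ⟨μ, rfl, hμ⟩, -⟩ := sInf_lt_iff.1 h
  refine ⟨max (μ - 1) 0, le_max_right _ _, ?_⟩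
  filter_upwards [hμ, eventually_gt_atTop 0] with q hqμ hq0
  have hq : (0 : ℝ) < q := Nat.cast_pos.2 hq0
  calc (q : ℝ) ^ (-max (μ - 1) 0) ≤ (q : ℝ) ^ (1 - μ) :=
        Real.rpow_le_rpow_of_exponent_le (Nat.one_le_cast.2 hq0)
          (by linarith [le_max_left (μ - 1) 0])
    _ = q * (1 / (q : ℝ) ^ μ) := by rw [Real.rpow_sub hq, Real.rpow_one]; ring
    _ ≤ q * |ξ - round (q * ξ) / q| := by gcongr; exact (hqμ _).le
    _ = intDist (q * ξ) := by
        rw [intDist, ← abs_of_pos hq, ← abs_mul, abs_of_pos hq]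
        congr 1
        field_simp

lemma exists_mul_rpow_neg_le_intDist {ξ : ℝ} (hξ : Irrational ξ)
    (h : irrationalityExponent ξ < ⊤) :
    ∃ c ν : ℝ, 0 < c ∧ c ≤ 1 ∧ 0 ≤ ν ∧
      ∀ m : ℕ, 0 < m → c * (m : ℝ) ^ (-ν) ≤ intDist (m * ξ) := by
  obtain ⟨ν, hν, hlow⟩ := exists_eventually_rpow_neg_le_intDist h
  obtain ⟨c, hc, hc1, hcν⟩ := exists_pos_mul_le_of_eventually_le
    (fun m hm => intDist_pos_of_irrational (hξ.natCast_mul hm.ne'))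
    (fun m hm => ⟨Real.rpow_nonneg m.cast_nonneg _,
      Real.rpow_le_one_of_one_le_of_nonpos (Nat.one_le_cast.2 hm) (by linarith)⟩) hlow
  exact ⟨c, ν, hc, hc1, hν, hcν⟩

lemma exists_nat_le_intDist_mul_lt (ξ : ℝ) {R : ℝ} (hR : 1 ≤ R) :
    ∃ k : ℕ, 0 < k ∧ (k : ℝ) ≤ R ∧ intDist (k * ξ) < 1 / R := by
  obtain ⟨k, hk0, hkR, hk⟩ := Real.exists_nat_abs_mul_sub_round_le ξ (Nat.floor_pos.2 hR)
  refine ⟨k, hk0, (Nat.cast_le.2 hkR).trans (Nat.floor_le (by linarith)), hk.trans_lt ?_⟩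
  exact one_div_lt_one_div_of_lt (by linarith) (Nat.lt_floor_add_one R)

lemma exists_nat_mul_sub_intCast_mem_Ico {s : ℝ} (hs : 0 < s) (x t : ℝ) :
    ∃ (n : ℕ) (z : ℤ), n * s ≤ 1 + s ∧ x + n * s - z ∈ Set.Ico t (t + s) := by
  set z := ⌈x - t⌉
  set d := z + t - x
  have hd : d ∈ Set.Ico 0 1 :=
    ⟨by linarith [Int.le_ceil (x - t)], by linarith [Int.ceil_lt_add_one (x - t)]⟩
  set n := ⌈d / s⌉₊
  have hn : d ≤ n * s ∧ n * s < d + s := by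
    rw [← div_le_iff₀ hs, ← lt_div_iff₀ hs, add_div, div_self hs.ne']
    exact ⟨Nat.le_ceil _, Nat.ceil_lt_add_one (div_nonneg hd.1 hs.le)⟩
  exact ⟨n, z, by linarith [hd.2], by linarith, by linarith⟩

lemma exists_intDist_add_nat_mul_mem_Ico (x : ℝ) {s t : ℝ} (hs : s ≠ 0) (ht : 0 ≤ t)
    (hts : t + |s| < 1 / 2) :
    ∃ n : ℕ, n * |s| ≤ 1 + |s| ∧ intDist (x + n * s) ∈ Set.Ico t (t + |s|) := by
  wlog hs_pos : 0 < s generalizing x s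
  · obtain ⟨n, hn, hmem⟩ := this (-x) (neg_ne_zero.2 hs) (by rwa [abs_neg])
      (neg_pos.2 (hs.lt_or_gt.resolve_right hs_pos))
    rw [abs_neg, ← intDist_neg, show -(-x + n * -s) = x + n * s by ring] at *
    exact ⟨n, hn, hmem⟩
  rw [abs_of_pos hs_pos] at *
  obtain ⟨n, z, hn, hmem⟩ := exists_nat_mul_sub_intCast_mem_Ico hs_pos x t
  refine ⟨n, hn, ?_⟩
  have hnonneg : 0 ≤ x + n * s - z := ht.trans hmem.1
  rwa [intDist_eq_of_abs_sub_lt (by rw [abs_of_nonneg hnonneg]; linarith [hmem.2]),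
    abs_of_nonneg hnonneg]

section

variable {ξ c ν : ℝ} (hξ : Irrational ξ) (hc : 0 < c) (hc1 : c ≤ 1) (hν : 0 ≤ ν)
  (hlow : ∀ m : ℕ, 0 < m → c * (m : ℝ) ^ (-ν) ≤ intDist (m * ξ))
include hξ hc hc1 hν hlow

lemma exists_intDist_mem_Icc {R : ℝ} (hR : 1 ≤ R) (m₀ : ℕ) {t : ℝ} (ht : 0 ≤ t)
    (htR : t + 1 / R < 1 / 2) :
    ∃ m : ℕ, m₀ < m ∧ (m : ℝ) ≤ m₀ + 3 * R ^ (1 + ν) / c ∧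
      intDist (m * ξ) ∈ Set.Icc t (t + 1 / R) := by
  obtain ⟨k, hk0, hkR, hks⟩ := exists_nat_le_intDist_mul_lt ξ hR
  set s := k * ξ - round (k * ξ)
  have hs : intDist (k * ξ) = |s| := rfl
  have hs0 : 0 < |s| := hs ▸ intDist_pos_of_irrational (hξ.natCast_mul hk0.ne')
  obtain ⟨n, hn, hmem⟩ := exists_intDist_add_nat_mul_mem_Ico ((m₀ + k : ℕ) * ξ)
    (abs_pos.1 hs0) ht (by linarith)
  refine ⟨m₀ + k + n * k, by omega, ?_, ?_⟩
  · have hRν : 1 ≤ R ^ ν := Real.one_le_rpow hR hν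
    have hsR : c ≤ |s| * R ^ ν := by
      have hkν : R ^ (-ν) ≤ (k : ℝ) ^ (-ν) :=
        Real.rpow_le_rpow_of_nonpos (Nat.cast_pos.2 hk0) hkR (by linarith)
      rw [Real.rpow_neg (by linarith)] at hkν
      have := (mul_le_mul_of_nonneg_left hkν hc.le).trans (hs ▸ hlow k hk0)
      rwa [← div_eq_mul_inv, div_le_iff₀ (by positivity)] at this
    have hs1 : |s| ≤ 1 := by
      linarith [hs ▸ hks, (div_le_one (by linarith : (0 : ℝ) < R)).2 hR]
    have hnc : n * c ≤ 2 * R ^ ν := by nlinarith [(Nat.cast_nonneg n : (0 : ℝ) ≤ n)]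
    have hkc : ((k : ℝ) + n * k) * c ≤ 3 * R ^ (1 + ν) := by
      rw [Real.rpow_add (by linarith), Real.rpow_one]
      nlinarith [mul_le_mul_of_nonneg_left hnc (Nat.cast_nonneg k : (0 : ℝ) ≤ k),
        mul_le_mul_of_nonneg_right hkR (by linarith : (0 : ℝ) ≤ 2 * R ^ ν)]
    have := (le_div_iff₀ hc).2 hkc
    push_cast
    linarith
  · have hshift : ((m₀ + k + n * k : ℕ) : ℝ) * ξ =
        (m₀ + k : ℕ) * ξ + n * s + (n * round (k * ξ) : ℤ) := by
      push_cast; ring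
    rw [hshift, intDist_add_intCast]
    exact ⟨hmem.1, hmem.2.le.trans (by linarith [hs ▸ hks])⟩

lemma eventually_exists_intDist_mem_Icc {ρ σ κ η : ℝ} (hρ : 0 ≤ ρ) (hρσ : ρ < σ)
    (hκ : 0 < κ) (hκν : κ < 1 / (1 + ν)) (hη : 1 < η) :
    ∀ᶠ q : ℕ in atTop, ∃ m : ℕ, ρ * q < m ∧ (m : ℝ) ≤ σ * q ∧
      intDist (m * ξ) ∈ Set.Icc ((q : ℝ) ^ (-κ)) (η * (q : ℝ) ^ (-κ)) := by
  set θ := 1 / (1 + ν)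
  -- With `R = (ε q) ^ θ`, the jump `3 R ^ (1 + ν) / c` allowed by the walk is `(σ - ρ) q / 2`.
  set ε := c * (σ - ρ) / 6
  have hθ : 0 < θ := by positivity
  have hε : 0 < ε := by have := sub_pos.2 hρσ; positivity
  have hR_top : Tendsto (fun q : ℕ => (ε * q) ^ θ) atTop atTop :=
    (tendsto_rpow_atTop hθ).comp (tendsto_natCast_atTop_atTop.const_mul_atTop hε)
  have hRκ_top : Tendsto (fun q : ℕ => (ε * q) ^ θ * (q : ℝ) ^ (-κ)) atTop atTop := by
    refine ((tendsto_rpow_atTop (sub_pos.2 hκν)).comp tendsto_natCast_atTop_atTop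
      |>.const_mul_atTop (Real.rpow_pos_of_pos hε θ)).congr' ?_
    filter_upwards [eventually_gt_atTop 0] with q hq
    have hq : (0 : ℝ) < q := Nat.cast_pos.2 hq
    simp only [Function.comp_apply]
    rw [Real.mul_rpow hε.le hq.le, mul_assoc, ← Real.rpow_add hq, sub_eq_add_neg]
  have hκ_zero : Tendsto (fun q : ℕ => η * (q : ℝ) ^ (-κ)) atTop (𝓝 0) := by
    simpa using ((tendsto_rpow_neg_atTop hκ).comp tendsto_natCast_atTop_atTop).const_mul η
  filter_upwards [hR_top.eventually_ge_atTop 1, hRκ_top.eventually_ge_atTop (1 / (η - 1)),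
    hκ_zero.eventually (gt_mem_nhds one_half_pos)] with q hR hRκ hsmall
  set R := (ε * q) ^ θ
  have hwidth : 1 / R ≤ (η - 1) * (q : ℝ) ^ (-κ) := by
    rw [div_le_iff₀ (sub_pos.2 hη)] at hRκ
    rw [div_le_iff₀ (by linarith)]
    linarith
  have hq0 : (0 : ℝ) ≤ q := Nat.cast_nonneg q
  have hRpow : R ^ (1 + ν) = ε * q := by
    rw [← Real.rpow_mul (by positivity), one_div_mul_cancel (by linarith), Real.rpow_one]
  obtain ⟨m, hm₀, hm, hmem⟩ := exists_intDist_mem_Icc hξ hc hc1 hν hlow hR ⌊ρ * q⌋₊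
    (Real.rpow_nonneg hq0 (-κ)) (by linarith)
  refine ⟨m, (Nat.floor_lt (by positivity)).1 hm₀, ?_, hmem.1, by linarith [hmem.2]⟩
  rw [hRpow] at hm
  have hfloor : (⌊ρ * q⌋₊ : ℝ) ≤ ρ * q := Nat.floor_le (by positivity)
  have hjump : 3 * (ε * q) / c = (σ - ρ) / 2 * q := by field_simp; ring
  nlinarith

end

lemma exists_strictMono_of_eventually_exists_gt {P : ℕ → ℕ → Prop}
    (h : ∀ᶠ q in atTop, ∃ m, q < m ∧ P q m) (N : ℕ) :
    ∃ u : ℕ → ℕ, N ≤ u 0 ∧ StrictMono u ∧ ∀ n, P (u n) (u (n + 1)) := by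
  obtain ⟨Q, hQ⟩ := eventually_atTop.1 h
  have hstep : ∀ q, ∃ m, max N Q ≤ q → q < m ∧ P q m := fun q => by
    by_cases hq : max N Q ≤ q
    · obtain ⟨m, hm⟩ := hQ q (le_of_max_le_right hq)
      exact ⟨m, fun _ => hm⟩
    · exact ⟨0, fun h => absurd h hq⟩
  choose f hf using hstep
  set u := fun n => f^[n] (max N Q)
  have hu_succ : ∀ n, u (n + 1) = f (u n) := fun n => Function.iterate_succ_apply' f n _
  have hu_ge : ∀ n, max N Q ≤ u n := fun n => by
    induction n with
    | zero => exact le_rfl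
    | succ n ih => rw [hu_succ]; exact ih.trans (hf _ ih).1.le
  refine ⟨u, le_of_max_le_left (hu_ge 0), strictMono_nat_of_lt_succ fun n => ?_, fun n => ?_⟩
  · rw [hu_succ]; exact (hf _ (hu_ge n)).1
  · rw [hu_succ]; exact (hf _ (hu_ge n)).2

lemma one_le_mul_intDist_add_mul_intDist (ξ : ℝ) {p q : ℕ} (hp : 0 < p) (hpq : p ≤ q)
    (h : intDist (q * ξ) < intDist (p * ξ)) :
    1 ≤ p * intDist (q * ξ) + q * intDist (p * ξ) := by
  set a := round ((p : ℝ) * ξ)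
  set b := round ((q : ℝ) * ξ)
  have hdet : ((q * a - p * b : ℤ) : ℝ) = p * (q * ξ - b) - q * (p * ξ - a) := by
    push_cast; ring
  have habs : ∀ (k : ℕ) (x : ℝ), |(k : ℝ) * x| = k * |x| := fun k x => by
    rw [abs_mul, Nat.abs_cast]
  have hne : q * a - p * b ≠ 0 := by
    intro h0
    rw [h0, Int.cast_zero, eq_comm, sub_eq_zero] at hdet
    have hprop : (p : ℝ) * intDist (q * ξ) = q * intDist (p * ξ) := by
      simpa only [habs, intDist] using congrArg abs hdet
    have hpq' : (p : ℝ) ≤ q := Nat.cast_le.2 hpq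
    nlinarith [intDist_nonneg (q * ξ), (Nat.cast_pos.2 hp : (0 : ℝ) < p)]
  calc (1 : ℝ) ≤ |((q * a - p * b : ℤ) : ℝ)| := by exact_mod_cast Int.one_le_abs hne
    _ ≤ |p * (q * ξ - b)| + |q * (p * ξ - a)| := by rw [hdet]; exact abs_sub _ _
    _ = p * intDist (q * ξ) + q * intDist (p * ξ) := by rw [habs, habs]; rfl

lemma alphaExp_nonneg (ξ : ℝ) (u : ℕ → ℕ) : 0 ≤ alphaExp ξ u :=
  le_limsup_of_frequently_le (Frequently.of_forall fun _ =>
    EReal.coe_nonneg.2 (div_nonneg (abs_nonneg _) (abs_nonneg _))) (by isBoundedDefault)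

section

variable {ξ : ℝ} {u : ℕ → ℕ}

lemma not_eventually_intDist_lt_and_lt_of_mul_lt_one (hξ : Irrational ξ) (hu : Monotone u)
    (hpos : ∀ n, 0 < u n) {a b : ℝ} (ha : a ≤ 1) (hab : a * b < 1) :
    ¬ ∀ᶠ n in atTop, intDist (u (n + 1) * ξ) < a * intDist (u n * ξ) ∧
      (u (n + 1) : ℝ) < b * u n := by
  intro h
  set P : ℕ → ℝ := fun n => u n * intDist (u n * ξ)
  have hd : ∀ n, 0 < intDist (u n * ξ) := fun n =>
    intDist_pos_of_irrational (hξ.natCast_mul (hpos n).ne')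
  have hP : ∀ n, 0 < P n := fun n => mul_pos (Nat.cast_pos.2 (hpos n)) (hd n)
  have hPdecay : ∀ᶠ n in atTop, ‖P (n + 1)‖ ≤ a * b * ‖P n‖ := by
    filter_upwards [h] with n ⟨hd_lt, hu_lt⟩
    rw [Real.norm_of_nonneg (hP _).le, Real.norm_of_nonneg (hP _).le]
    calc P (n + 1) ≤ (b * u n) * (a * intDist (u n * ξ)) :=
          mul_le_mul hu_lt.le hd_lt.le (hd _).le ((Nat.cast_nonneg _).trans hu_lt.le)
      _ = a * b * P n := by ring
  have hPlim : Tendsto (fun n => (a + b) * P n) atTop (𝓝 0) := by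
    simpa using ((summable_of_ratio_norm_eventually_le hab hPdecay).tendsto_atTop_zero).const_mul
      (a + b)
  have hPlow : ∀ᶠ n in atTop, 1 ≤ (a + b) * P n := by
    filter_upwards [h] with n ⟨hd_lt, hu_lt⟩
    have hkey := one_le_mul_intDist_add_mul_intDist ξ (hpos n) (hu n.le_succ)
      (hd_lt.trans_le (by nlinarith [hd n]))
    have := mul_le_mul_of_nonneg_left hd_lt.le (Nat.cast_nonneg (u n))
    have := mul_le_mul_of_nonneg_right hu_lt.le (hd n).le
    nlinarith
  obtain ⟨n, hn1, hn2⟩ := (hPlow.and (hPlim.eventually (gt_mem_nhds one_pos))).exists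
  linarith

theorem one_le_toReal_alphaExp_mul_toReal_betaExp (hξ : Irrational ξ) (hu : Monotone u)
    (hpos : ∀ n, 0 < u n) (hα : alphaExp ξ u < 1) (hβ : betaExp u < ⊤) :
    1 ≤ (alphaExp ξ u).toReal * (betaExp u).toReal := by
  set a := (alphaExp ξ u).toReal
  set b := (betaExp u).toReal
  by_contra! hab
  have ha : a < 1 := by
    rcases eq_or_ne (alphaExp ξ u) ⊥ with h | h
    · simp [a, h]
    · exact_mod_cast (EReal.coe_toReal_le h).trans_lt hα
  have hnear {f : ℝ → ℝ} (hf : Continuous f) (h0 : f 0 < 1) : ∀ᶠ ε in 𝓝[>] 0, f ε < 1 :=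
    ((hf.tendsto 0).mono_left nhdsWithin_le_nhds).eventually (gt_mem_nhds h0)
  obtain ⟨ε, (hε : 0 < ε), ha', hab'⟩ := (eventually_mem_nhdsWithin.and
    ((hnear (f := fun ε => a + ε) (by fun_prop) (by simpa using ha)).and
    (hnear (f := fun ε => (a + ε) * (b + ε)) (by fun_prop) (by simpa using hab)))).exists
  refine not_eventually_intDist_lt_and_lt_of_mul_lt_one hξ hu hpos ha'.le hab' ?_
  have hαε : alphaExp ξ u < (a + ε : ℝ) := (EReal.le_coe_toReal (ne_top_of_lt hα)).trans_lt
    (EReal.coe_lt_coe_iff.2 (by linarith))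
  have hβε : betaExp u < (b + ε : ℝ) :=
    (EReal.le_coe_toReal hβ.ne).trans_lt (EReal.coe_lt_coe_iff.2 (by linarith))
  filter_upwards [eventually_lt_of_limsup_lt hαε, eventually_lt_of_limsup_lt hβε] with n hαn hβn
  exact ⟨(div_lt_iff₀ (intDist_pos_of_irrational (hξ.natCast_mul (hpos n).ne'))).1
    (EReal.coe_lt_coe_iff.1 hαn),
    (div_lt_iff₀ (Nat.cast_pos.2 (hpos n))).1 (EReal.coe_lt_coe_iff.1 hβn)⟩

theorem zero_le_densityExponent (hξ : Irrational ξ) : 0 ≤ densityExponent ξ :=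
  le_sInf fun _ ⟨_, hu, hpos, hα, hβ, hx⟩ => hx ▸ EReal.coe_nonneg.2 (Real.log_nonneg
    (Real.one_le_sqrt.2 (one_le_toReal_alphaExp_mul_toReal_betaExp hξ hu hpos hα hβ)))

lemma betaExp_le_of_forall_le (hpos : ∀ n, 0 < u n) {σ : ℝ}
    (h : ∀ n, (u (n + 1) : ℝ) ≤ σ * u n) : betaExp u ≤ σ :=
  limsup_le_of_le (by isBoundedDefault) (Eventually.of_forall fun n =>
    EReal.coe_le_coe_iff.2 ((div_le_iff₀ (Nat.cast_pos.2 (hpos n))).2 (h n)))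

lemma alphaExp_le_of_forall_intDist_mem_Icc (hpos : ∀ n, 0 < u n) {ρ κ η : ℝ} (hρ : 0 < ρ)
    (hκ : 0 ≤ κ) (hgrow : ∀ n, ρ * u n ≤ u (n + 1))
    (hd : ∀ n, intDist (u (n + 1) * ξ) ∈ Set.Icc ((u n : ℝ) ^ (-κ)) (η * (u n : ℝ) ^ (-κ))) :
    alphaExp ξ u ≤ (η * ρ ^ (-κ) : ℝ) := by
  have hu : ∀ n, (0 : ℝ) < u n := fun n => Nat.cast_pos.2 (hpos n)
  have hη : 0 ≤ η := by nlinarith [(hd 0).1.trans (hd 0).2, Real.rpow_pos_of_pos (hu 0) (-κ)]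
  refine limsup_le_of_le (by isBoundedDefault) (eventually_atTop.2 ⟨1, fun n hn => ?_⟩)
  obtain ⟨k, rfl⟩ : ∃ k, n = k + 1 := ⟨n - 1, by omega⟩
  have hdk : 0 < intDist (u (k + 1) * ξ) := (Real.rpow_pos_of_pos (hu k) _).trans_le (hd k).1
  refine EReal.coe_le_coe_iff.2 ((div_le_iff₀ hdk).2 ?_)
  calc intDist (u (k + 1 + 1) * ξ) ≤ η * (u (k + 1) : ℝ) ^ (-κ) := (hd (k + 1)).2
    _ ≤ η * (ρ * u k) ^ (-κ) := mul_le_mul_of_nonneg_left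
        (Real.rpow_le_rpow_of_nonpos (mul_pos hρ (hu k)) (hgrow k) (neg_nonpos.2 hκ)) hη
    _ = η * ρ ^ (-κ) * (u k : ℝ) ^ (-κ) := by rw [Real.mul_rpow hρ.le (hu k).le]; ring
    _ ≤ η * ρ ^ (-κ) * intDist (u (k + 1) * ξ) := by gcongr; exact (hd k).1

lemma densityExponent_le_log (hu : Monotone u) (hpos : ∀ n, 0 < u n) {A B : ℝ}
    (hα : alphaExp ξ u ≤ A) (hA : A < 1) (hβ : betaExp u ≤ B) (hB : 1 ≤ B) :
    densityExponent ξ ≤ Real.log B := by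
  calc densityExponent ξ ≤ _ := sInf_le ⟨u, hu, hpos, hα.trans_lt (EReal.coe_lt_coe_iff.2 hA),
        hβ.trans_lt (EReal.coe_lt_top B), rfl⟩
    _ ≤ Real.log B := EReal.coe_le_coe_iff.2 ?_
  set a := (alphaExp ξ u).toReal
  set b := (betaExp u).toReal
  have hα0 := alphaExp_nonneg ξ u
  have ha0 : 0 ≤ a := EReal.toReal_nonneg hα0
  have ha1 : a ≤ 1 := by
    have := EReal.toReal_le_toReal hα (ne_bot_of_le_ne_bot (by simp) hα0) (EReal.coe_ne_top A)
    rw [EReal.toReal_coe] at this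
    linarith
  have hbB : b ≤ B := by
    rcases eq_or_ne (betaExp u) ⊥ with h | h
    · simp [b, h]; linarith
    · simpa using EReal.toReal_le_toReal hβ h (EReal.coe_ne_top B)
  have hsqrt : √(a * b) ≤ B := Real.sqrt_le_iff.2 ⟨by linarith, by
    rcases le_total 0 b with hb | hb <;> nlinarith⟩
  rcases (Real.sqrt_nonneg (a * b)).eq_or_lt with h0 | h0
  · rw [← h0, Real.log_zero]; exact Real.log_nonneg hB
  · exact Real.log_le_log h0 hsqrt

theorem densityExponent_le_of_mul_rpow_neg_le_intDist (hξ : Irrational ξ) {c ν : ℝ}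
    (hc : 0 < c) (hc1 : c ≤ 1) (hν : 0 ≤ ν)
    (hlow : ∀ m : ℕ, 0 < m → c * (m : ℝ) ^ (-ν) ≤ intDist (m * ξ)) {ε : ℝ} (hε : 0 < ε) :
    densityExponent ξ ≤ ε := by
  set ρ := Real.exp (ε / 2)
  set κ := 1 / (2 * (1 + ν))
  have hρ : 1 < ρ := Real.one_lt_exp_iff.2 (by linarith)
  have hκ : 0 < κ := by positivity
  have hsucc := eventually_exists_intDist_mem_Icc hξ hc hc1 hν hlow (by positivity)
    (Real.exp_lt_exp.2 (by linarith : ε / 2 < ε)) hκ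
    (by rw [one_div_lt_one_div]; all_goals linarith)
    (Real.one_lt_rpow hρ (by positivity : 0 < κ / 2))
  obtain ⟨u, hu0, hu, hstep⟩ := exists_strictMono_of_eventually_exists_gt (hsucc.mono
    fun q ⟨m, hm⟩ =>
      ⟨m, Nat.cast_lt.1 ((le_mul_of_one_le_left q.cast_nonneg hρ.le).trans_lt hm.1), hm⟩) 1
  have hpos : ∀ n, 0 < u n := fun n => hu0.trans (hu.monotone n.zero_le)
  have hα := alphaExp_le_of_forall_intDist_mem_Icc hpos (by positivity) hκ.le
    (fun n => (hstep n).1.le) (fun n => (hstep n).2.2)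
  rw [← Real.rpow_add (by positivity)] at hα
  have hβ := betaExp_le_of_forall_le hpos (fun n => (hstep n).2.1)
  simpa using densityExponent_le_log hu.monotone hpos hα
    (Real.rpow_lt_one_of_one_lt_of_neg hρ (by linarith)) hβ (Real.one_le_exp hε.le)

end

theorem density_exponent_eq_zero_of_not_liouville (ξ : ℝ) (hξ : Irrational ξ)
    (h : irrationalityExponent ξ < ⊤) :
    densityExponent ξ = 0 := by
  obtain ⟨c, ν, hc, hc1, hν, hlow⟩ := exists_mul_rpow_neg_le_intDist hξ h
  refine le_antisymm (EReal.le_of_forall_lt_iff_le.1 fun ε hε => ?_) (zero_le_densityExponent hξ)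
  exact densityExponent_le_of_mul_rpow_neg_le_intDist hξ hc hc1 hν hlow (EReal.coe_pos.1 hε)
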